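/- Let d ≥ 2 be even and let x be an integer with 1 ≤ x ≤ d−1. Then the three partitions of d given by (max(x, d−x), min(x, d−x)), (2, 2, …, 2) (d/2 twos), and (2, 2, …, 2) (d/2 twos) are realized by permutations if and only if x = d/2. -/

import Mathlib

/-- Multiset of cycle lengths of a permutation of a finite type, counting each
fixed point as a cycle of length 1. -/
def fullCycleType {α : Type*} [Fintype α] [DecidableEq α] (τ : Equiv.Perm α) :
    Multiset ℕ :=
  τ.cycleType + Multiset.replicate (Fintype.card α - τ.cycleType.sum) 1

/-- The `n` partitions `parts 0, …, parts (n-1)` of `d` are realized by permutations: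
there are `τ₁, …, τₙ ∈ S_d` with `τ₁ ⋯ τₙ = 1`, generating a subgroup acting
transitively on `{1, …, d}`, where the multiset of cycle lengths of `τᵢ`
(fixed points counting as cycles of length 1) is `parts i`. -/
def realizable (d n : ℕ) (parts : Fin n → Multiset ℕ) : Prop :=
  ∃ τ : Fin n → Equiv.Perm (Fin d),
    (List.ofFn τ).prod = 1 ∧
    (∀ x y : Fin d, ∃ g ∈ Subgroup.closure (Set.range τ), g x = y) ∧
    ∀ i, fullCycleType (τ i) = parts i

/-!
If `τ₀ τ₁ τ₂ = 1` with `τ₁, τ₂` involutions, then `τ₁ τ₀ τ₁⁻¹ = τ₀⁻¹`, and `τ₂ = (τ₀ τ₁)⁻¹`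
lies in `⟨τ₀, τ₁⟩`. Conjugating `τ₀` to `τ₀` or `τ₀⁻¹` preserves the lengths of its orbits,
so every element of the monodromy group maps a point to one whose `τ₀`-cycle has the same
length; transitivity then forces the two cycles of `τ₀` to have equal length.

Conversely, on `ZMod d` with `d` even, the translation `z ↦ z + 2` has two orbits (the even
and the odd residues), each of length `d / 2`, and it is the product of the reflections
`z ↦ -1 - z` and `z ↦ 1 - z`, which have no fixed points and exchange the two orbits.
-/

open Equiv Equiv.Perm MulAction Subgroup

theorem mul_mul_inv_eq_inv_of_mul_mul_eq_one {G : Type*} [Group G] {a b c : G}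
    (habc : a * b * c = 1) (hb : b ^ 2 = 1) (hc : c ^ 2 = 1) : b * a * b⁻¹ = a⁻¹ := by
  have hab : (a * b) ^ 2 = 1 := by
    rwa [eq_inv_of_mul_eq_one_right habc, inv_pow, inv_eq_one] at hc
  calc b * a * b⁻¹ = a⁻¹ * (a * b) ^ 2 * (b ^ 2)⁻¹ := by rw [pow_two, pow_two]; group
    _ = a⁻¹ := by rw [hab, hb]; group

namespace MulAction

variable {G α : Type*} [Group G] [MulAction G α]

theorem period_mul_mul_inv_smul (g m : G) (a : α) :
    period (g * m * g⁻¹) (g • a) = period m a := by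
  refine Nat.dvd_right_iff_eq.mp fun n => ?_
  rw [← pow_smul_eq_iff_period_dvd, ← pow_smul_eq_iff_period_dvd, conj_pow, mul_smul, mul_smul,
    inv_smul_smul, smul_left_cancel_iff]

theorem period_eq_prime {M : Type*} [Monoid M] [MulAction M α] {p : ℕ} (hp : p.Prime) {m : M}
    {a : α} (hpow : m ^ p • a = a) (hne : m • a ≠ a) : period m a = p :=
  haveI := Fact.mk hp
  Function.minimalPeriod_eq_prime (isPeriodicPt_smul_iff.mpr hpow) hne

theorem period_smul_of_mem_closure_pair {m r : G} (hr : r * m * r⁻¹ = m⁻¹) {g : G}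
    (hg : g ∈ closure {m, r}) (a : α) : period m (g • a) = period m a := by
  induction hg using closure_induction generalizing a with
  | mem g hg =>
    rcases hg with rfl | rfl
    · rw [← period_mul_mul_inv_smul g g a, mul_inv_cancel_right]
    · have hr' : g * m⁻¹ * g⁻¹ = m := by
        rw [show g * m⁻¹ * g⁻¹ = (g * m * g⁻¹)⁻¹ by group, hr, inv_inv]
      rw [← period_inv m a, ← period_mul_mul_inv_smul g m⁻¹ a, hr']
  | one => rw [one_smul]
  | mul g h _ _ hg hh => rw [mul_smul, hg, hh]
  | inv g _ hg => rw [← hg, smul_inv_smul]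

end MulAction

namespace Equiv.Perm

variable {α : Type*} [Fintype α] [DecidableEq α]

theorem fullCycleType_eq_parts_partition (σ : Perm α) :
    fullCycleType σ = σ.partition.parts := by
  rw [fullCycleType, sum_cycleType]
  rfl

theorem sum_fullCycleType (σ : Perm α) : (fullCycleType σ).sum = Fintype.card α := by
  rw [fullCycleType_eq_parts_partition]
  exact σ.partition.parts_sum

theorem period_eq_card_support_cycleOf {σ : Perm α} {p : α} (hp : σ p ≠ p) :
    period σ p = (σ.cycleOf p).support.card := by
  have hc := σ.isCycle_cycleOf hp
  rw [← hc.orderOf]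
  refine Nat.dvd_right_iff_eq.mp fun n => ?_
  rw [← pow_smul_eq_iff_period_dvd, orderOf_dvd_iff_pow_eq_one,
    hc.pow_eq_one_iff' (by rwa [cycleOf_apply_self]), cycleOf_pow_apply_self, Perm.smul_def]

theorem mem_cycleType_iff_exists_period {σ : Perm α} {n : ℕ} :
    n ∈ σ.cycleType ↔ ∃ p, σ p ≠ p ∧ period σ p = n := by
  rw [cycleType_def, Multiset.mem_map]
  constructor
  · rintro ⟨c, hc, rfl⟩
    obtain ⟨p, hp⟩ := (mem_cycleFactorsFinset_iff.mp hc).1.nonempty_support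
    obtain rfl := cycle_is_cycleOf hp hc
    have hmoved := mem_support.mp (cycleOf_mem_cycleFactorsFinset_iff.mp hc)
    exact ⟨p, hmoved, period_eq_card_support_cycleOf hmoved⟩
  · rintro ⟨p, hp, rfl⟩
    exact ⟨σ.cycleOf p, cycleOf_mem_cycleFactorsFinset_iff.mpr (mem_support.mpr hp),
      (period_eq_card_support_cycleOf hp).symm⟩

theorem mem_fullCycleType_iff {σ : Perm α} {n : ℕ} :
    n ∈ fullCycleType σ ↔ ∃ p : α, period σ p = n := by
  rw [fullCycleType, Multiset.mem_add, mem_cycleType_iff_exists_period, Multiset.mem_replicate,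
    sum_cycleType, Nat.sub_ne_zero_iff_lt, Finset.card_lt_iff_ne_univ,
    Ne, Finset.eq_univ_iff_forall]
  simp only [mem_support, not_forall, not_not]
  constructor
  · rintro (⟨p, -, hp⟩ | ⟨⟨p, hp⟩, rfl⟩)
    · exact ⟨p, hp⟩
    · exact ⟨p, period_eq_one_iff.mpr hp⟩
  · rintro ⟨p, rfl⟩
    by_cases hp : σ p = p
    · exact Or.inr ⟨⟨p, hp⟩, period_eq_one_iff.mpr hp⟩
    · exact Or.inl ⟨p, hp, rfl⟩

theorem fullCycleType_eq_replicate_of_period {σ : Perm α} {k : ℕ} (hk : 0 < k)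
    (h : ∀ p : α, period σ p = k) :
    fullCycleType σ = Multiset.replicate (Fintype.card α / k) k := by
  obtain ⟨n, hn⟩ : ∃ n, fullCycleType σ = Multiset.replicate n k :=
    ⟨_, Multiset.eq_replicate.mpr ⟨rfl, fun m hm => by
      obtain ⟨p, rfl⟩ := mem_fullCycleType_iff.mp hm
      exact h p⟩⟩
  have hcard : n * k = Fintype.card α := by
    rw [← sum_fullCycleType σ, hn, Multiset.sum_replicate, smul_eq_mul]
  rw [hn, ← hcard, Nat.mul_div_cancel _ hk]

theorem sq_eq_one_of_fullCycleType_eq_replicate_two {σ : Perm α} {m : ℕ}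
    (h : fullCycleType σ = Multiset.replicate m 2) : σ ^ 2 = 1 := by
  ext p
  have hp : period σ p = 2 :=
    Multiset.eq_of_mem_replicate (h ▸ mem_fullCycleType_iff.mpr ⟨p, rfl⟩)
  rw [← hp, ← Perm.smul_def, pow_period_smul, one_apply]

theorem fullCycleType_permCongr {β : Type*} [Fintype β] [DecidableEq β] (e : α ≃ β)
    (σ : Perm α) : fullCycleType (e.permCongr σ) = fullCycleType σ := by
  have hext :
      e.permCongr σ = σ.extendDomain (e.trans (subtypeUnivEquiv fun _ => trivial).symm) := by
    ext y
    rw [extendDomain_apply_subtype _ _ (b := y) trivial]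
    simp [permCongr_apply]
  rw [fullCycleType, fullCycleType, hext, cycleType_extendDomain, Fintype.card_congr e]

end Equiv.Perm

theorem period_addLeft {G : Type*} [AddGroup G] (c z : G) :
    period (Equiv.addLeft c) z = addOrderOf c := by
  refine Nat.dvd_right_iff_eq.mp fun n => ?_
  rw [← pow_smul_eq_iff_period_dvd, nsmul_addLeft, Perm.smul_def, coe_addLeft, add_eq_right,
    addOrderOf_dvd_iff_nsmul_eq_zero]

theorem period_subLeft {G : Type*} [AddCommGroup G] {c : G} (hc : ∀ z : G, z + z ≠ c) (z : G) :
    period (Equiv.subLeft c) z = 2 := by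
  refine period_eq_prime Nat.prime_two ?_ fun h => hc z ?_
  · rw [Perm.smul_def, sq, Perm.mul_apply, subLeft_apply, subLeft_apply, sub_sub_cancel]
  · rw [Perm.smul_def, subLeft_apply, sub_eq_iff_eq_add] at h
    exact h.symm

theorem exists_mem_apply_eq_of_base {α : Type*} {H : Subgroup (Perm α)} {x₀ : α}
    (h : ∀ y, ∃ g ∈ H, g x₀ = y) (x y : α) : ∃ g ∈ H, g x = y := by
  obtain ⟨gx, hgx, rfl⟩ := h x
  obtain ⟨gy, hgy, rfl⟩ := h y
  exact ⟨gy * gx⁻¹, mul_mem hgy (inv_mem hgx), by simp⟩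

namespace ZMod

variable {d : ℕ}

theorem add_self_ne_one_of_even (hd : Even d) (z : ZMod d) : z + z ≠ 1 := by
  intro h
  have h2 := congrArg (castHom hd.two_dvd (ZMod 2)) h
  rw [map_add, map_one] at h2
  generalize castHom hd.two_dvd (ZMod 2) z = w at h2
  revert w
  decide

theorem addOrderOf_two_of_even [NeZero d] (hd : Even d) : addOrderOf (2 : ZMod d) = d / 2 := by
  rw [← Nat.cast_ofNat, addOrderOf_coe 2 (NeZero.ne d), Nat.gcd_eq_right hd.two_dvd]

theorem exists_mem_closure_apply_zero_eq [NeZero d] (z : ZMod d) :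
    ∃ g ∈ closure {Equiv.addLeft (2 : ZMod d), Equiv.subLeft 1}, g 0 = z := by
  have h2 : Equiv.addLeft (2 : ZMod d) ∈ closure {Equiv.addLeft 2, Equiv.subLeft 1} :=
    subset_closure (by simp)
  have h1 : Equiv.subLeft (1 : ZMod d) ∈ closure {Equiv.addLeft 2, Equiv.subLeft 1} :=
    subset_closure (by simp)
  rw [← natCast_zmod_val z]
  obtain ⟨k, hk | hk⟩ := Nat.even_or_odd' z.val
  · refine ⟨Equiv.addLeft 2 ^ k, pow_mem h2 k, ?_⟩
    simp [hk, nsmul_addLeft, nsmul_eq_mul, mul_comm]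
  · refine ⟨Equiv.addLeft 2 ^ k * Equiv.subLeft 1, mul_mem (pow_mem h2 k) h1, ?_⟩
    simp [hk, nsmul_addLeft, nsmul_eq_mul, mul_comm]

end ZMod

theorem realizable_of_equiv {α : Type*} [Fintype α] [DecidableEq α] {d n : ℕ}
    {parts : Fin n → Multiset ℕ} (e : α ≃ Fin d) (τ : Fin n → Perm α)
    (hprod : (List.ofFn τ).prod = 1)
    (htrans : ∀ x y : α, ∃ g ∈ closure (Set.range τ), g x = y)
    (hparts : ∀ i, fullCycleType (τ i) = parts i) : realizable d n parts := by
  let f := e.permCongrHom.toMonoidHom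
  refine ⟨fun i => f (τ i), ?_, fun x y => ?_, fun i => ?_⟩
  · rw [← Function.comp_def, ← List.map_ofFn, ← map_list_prod, hprod, map_one]
  · obtain ⟨g, hg, hgxy⟩ := htrans (e.symm x) (e.symm y)
    refine ⟨f g, ?_, by simp [f, permCongr_apply, hgxy]⟩
    rw [← Function.comp_def, Set.range_comp, ← MonoidHom.map_closure]
    exact mem_map_of_mem f hg
  · simpa [f, permCongr_apply] using (fullCycleType_permCongr e (τ i)).trans (hparts i)

theorem eq_of_realizable_involutions {d m a b : ℕ}
    (h : realizable d 3 ![{a, b}, Multiset.replicate m 2, Multiset.replicate m 2]) : a = b := by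
  obtain ⟨τ, hprod, htrans, hparts⟩ := h
  have hprod' : τ 0 * τ 1 * τ 2 = 1 := by simpa [List.ofFn_succ, mul_assoc] using hprod
  have hinv : τ 1 * τ 0 * (τ 1)⁻¹ = (τ 0)⁻¹ :=
    mul_mul_inv_eq_inv_of_mul_mul_eq_one hprod'
      (sq_eq_one_of_fullCycleType_eq_replicate_two (hparts 1))
      (sq_eq_one_of_fullCycleType_eq_replicate_two (hparts 2))
  have hle : closure (Set.range τ) ≤ closure {τ 0, τ 1} := by
    have h0 : τ 0 ∈ closure {τ 0, τ 1} := subset_closure (by simp)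
    have h1 : τ 1 ∈ closure {τ 0, τ 1} := subset_closure (by simp)
    have h2 : τ 2 ∈ closure {τ 0, τ 1} := by
      rw [eq_inv_of_mul_eq_one_right hprod']
      exact inv_mem (mul_mem h0 h1)
    rw [closure_le]
    rintro _ ⟨i, rfl⟩
    fin_cases i
    exacts [h0, h1, h2]
  have ha : a ∈ fullCycleType (τ 0) := by simp [hparts 0]
  have hb : b ∈ fullCycleType (τ 0) := by simp [hparts 0]
  obtain ⟨p, rfl⟩ := mem_fullCycleType_iff.mp ha
  obtain ⟨q, rfl⟩ := mem_fullCycleType_iff.mp hb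
  obtain ⟨g, hg, rfl⟩ := htrans p q
  exact (period_smul_of_mem_closure_pair hinv (hle hg) p).symm

theorem realizable_dihedral {d : ℕ} [NeZero d] (hd : Even d) :
    realizable d 3
      ![{d / 2, d / 2}, Multiset.replicate (d / 2) 2, Multiset.replicate (d / 2) 2] := by
  let τ : Fin 3 → Perm (ZMod d) := ![Equiv.addLeft 2, Equiv.subLeft (-1), Equiv.subLeft 1]
  have hhalf : 0 < d / 2 := by
    obtain ⟨k, rfl⟩ := hd
    have := NeZero.ne (k + k)
    omega
  have hne_one := ZMod.add_self_ne_one_of_even hd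
  have hne_neg_one (z : ZMod d) : z + z ≠ -1 := fun h =>
    hne_one (-z) (by rw [← neg_add, h, neg_neg])
  refine realizable_of_equiv (ZMod.finEquiv d).symm.toEquiv τ ?_ (fun x y => ?_) fun i => ?_
  · ext z
    simp [τ, List.ofFn_succ]
    ring
  · refine exists_mem_apply_eq_of_base (x₀ := 0) (fun z => ?_) x y
    obtain ⟨g, hg, hg0⟩ := ZMod.exists_mem_closure_apply_zero_eq z
    refine ⟨g, closure_mono ?_ hg, hg0⟩
    rintro _ (rfl | rfl)
    exacts [⟨0, rfl⟩, ⟨2, rfl⟩]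
  · fin_cases i
    · change fullCycleType (Equiv.addLeft (2 : ZMod d)) = {d / 2, d / 2}
      rw [fullCycleType_eq_replicate_of_period hhalf
        (fun z => (period_addLeft 2 z).trans (ZMod.addOrderOf_two_of_even hd)),
        ZMod.card, Nat.div_div_self hd.two_dvd (NeZero.ne d)]
      rfl
    · change fullCycleType (Equiv.subLeft (-1 : ZMod d)) = Multiset.replicate (d / 2) 2
      rw [fullCycleType_eq_replicate_of_period two_pos (period_subLeft hne_neg_one), ZMod.card]
    · change fullCycleType (Equiv.subLeft (1 : ZMod d)) = Multiset.replicate (d / 2) 2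
      rw [fullCycleType_eq_replicate_of_period two_pos (period_subLeft hne_one), ZMod.card]

theorem stmt9_general (d x : ℕ) (hd : 2 ≤ d) (hev : Even d) :
    realizable d 3
      ![({max x (d - x), min x (d - x)} : Multiset ℕ),
        Multiset.replicate (d / 2) 2,
        Multiset.replicate (d / 2) 2] ↔
    x = d / 2 := by
  constructor
  · intro h
    have hmax := eq_of_realizable_involutions h
    omega
  · rintro rfl
    obtain ⟨r, rfl⟩ := hev
    rw [show r + r - (r + r) / 2 = (r + r) / 2 by omega, max_self, min_self]
    have : NeZero (r + r) := ⟨by omega⟩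
    exact realizable_dihedral ⟨r, rfl⟩

/-- Proposition 2.8, due to Edmonds–Kulkarni–Stong.
For even `d`, the partitions `(x, d-x)`, `(2,…,2)`, `(2,…,2)` are realized by
permutations iff `x = d/2`. -/
theorem stmt9 (d x : ℕ) (hd : 2 ≤ d) (hev : Even d) (hx1 : 1 ≤ x)
    (hxd : x ≤ d - 1) :
    realizable d 3
      ![({max x (d - x), min x (d - x)} : Multiset ℕ),
        Multiset.replicate (d / 2) 2,
        Multiset.replicate (d / 2) 2] ↔
    x = d / 2 :=
  stmt9_general d x hd hev
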